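/- Let T be a finite tree with at least two vertices. If M is the unique minimum ev-dominating set of T, then T has a unique minimum paired-dominating set, namely V_T(M). -/

import Mathlib

open SimpleGraph

variable {V : Type*}

/-- `D` is a dominating set of `G`: every vertex outside `D` has a neighbor in `D`. -/
def IsDomSet (G : SimpleGraph V) (D : Set V) : Prop :=
  ∀ v ∉ D, ∃ u ∈ D, G.Adj u v

/-- The edge `e` ev-dominates the vertex `v`: `e` is incident to `v` or to a neighbor of `v`. -/
def EvDom (G : SimpleGraph V) (e : Sym2 V) (v : V) : Prop :=
  v ∈ e ∨ ∃ u ∈ e, G.Adj u v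

/-- `M` is an edge-vertex dominating set of `G`. -/
def IsEvDomSet (G : SimpleGraph V) (M : Set (Sym2 V)) : Prop :=
  M ⊆ G.edgeSet ∧ ∀ v : V, ∃ e ∈ M, EvDom G e v

/-- `M` is a minimum edge-vertex dominating set of `G`. -/
def IsMinEvDomSet (G : SimpleGraph V) (M : Set (Sym2 V)) : Prop :=
  IsEvDomSet G M ∧ ∀ M' : Set (Sym2 V), IsEvDomSet G M' → M.ncard ≤ M'.ncard

/-- The edge-vertex domination number `γ_ev(G)`. -/
noncomputable def evNum (G : SimpleGraph V) : ℕ :=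
  sInf {n | ∃ M : Set (Sym2 V), IsEvDomSet G M ∧ M.ncard = n}

/-- The set of all endpoints of edges in `M`. -/
def edgeVerts (M : Set (Sym2 V)) : Set V := {v | ∃ e ∈ M, v ∈ e}

/-- `M` is a perfect matching of the induced subgraph `G[D]`: a set of edges of `G`
with all endpoints in `D`, such that every vertex of `D` lies in exactly one edge of `M`. -/
def IsPMOn (G : SimpleGraph V) (D : Set V) (M : Set (Sym2 V)) : Prop :=
  M ⊆ G.edgeSet ∧ (∀ e ∈ M, ∀ v ∈ e, v ∈ D) ∧ ∀ v ∈ D, ∃! e, e ∈ M ∧ v ∈ e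

/-- `D` is a paired-dominating set of `G`. -/
def IsPairedDomSet (G : SimpleGraph V) (D : Set V) : Prop :=
  IsDomSet G D ∧ ∃ M : Set (Sym2 V), IsPMOn G D M

/-- `D` is a minimum paired-dominating set of `G`. -/
def IsMinPairedDomSet (G : SimpleGraph V) (D : Set V) : Prop :=
  IsPairedDomSet G D ∧ ∀ D' : Set V, IsPairedDomSet G D' → D.ncard ≤ D'.ncard

/-- The paired-domination number `γ_pr(G)`. -/
noncomputable def prNum (G : SimpleGraph V) : ℕ :=
  sInf {n | ∃ D : Set V, IsPairedDomSet G D ∧ D.ncard = n}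

/-- No two distinct edges of `M` share a vertex. -/
def NoSharedVertex (M : Set (Sym2 V)) : Prop :=
  ∀ e ∈ M, ∀ f ∈ M, e ≠ f → ∀ v : V, v ∈ e → v ∉ f

/-- `G` has no isolated vertex. -/
def NoIsolated (G : SimpleGraph V) : Prop := ∀ v : V, ∃ u, G.Adj u v

/-! If two edges `vu` and `f` of a minimum ev-dominating set `M` share the vertex `v`, then
replacing `vu` by another edge at `u` (or by nothing, when `u` is a leaf) leaves a minimum
ev-dominating set, since `f` takes over everything `vu` dominated through `v`. Uniqueness therefore
forces `M` to be a matching, and its endpoints form a paired-dominating set of size `2|M|`.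
Conversely the pairing of any paired-dominating set `D` is an ev-dominating set with half as many
elements as `D`, so `V(M)` is minimum, and the pairing of any other minimum `D` is a minimum
ev-dominating set, hence `M`. -/

lemma Set.ncard_insert_sdiff_singleton_le {α : Type*} {s : Set α} {a b : α} (hb : b ∈ s)
    (hs : s.Finite) : (insert a (s \ {b})).ncard ≤ s.ncard :=
  (Set.ncard_insert_le _ _).trans (Set.ncard_sdiff_singleton_add_one hb hs).le

section

variable {G : SimpleGraph V}

lemma IsPMOn.noSharedVertex {D : Set V} {M : Set (Sym2 V)} (hM : IsPMOn G D M) :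
    NoSharedVertex M := by
  intro e he f hf hef v hve hvf
  obtain ⟨g, -, hg⟩ := hM.2.2 v (hM.2.1 e he v hve)
  exact hef ((hg e ⟨he, hve⟩).trans (hg f ⟨hf, hvf⟩).symm)

lemma IsPMOn.edgeVerts_eq {D : Set V} {M : Set (Sym2 V)} (hM : IsPMOn G D M) :
    edgeVerts M = D := by
  ext v
  constructor
  · rintro ⟨e, he, hve⟩
    exact hM.2.1 e he v hve
  · intro hv
    obtain ⟨e, ⟨he, hve⟩, -⟩ := hM.2.2 v hv
    exact ⟨e, he, hve⟩

lemma isPMOn_edgeVerts {M : Set (Sym2 V)} (hMG : M ⊆ G.edgeSet) (hM : NoSharedVertex M) :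
    IsPMOn G (edgeVerts M) M := by
  refine ⟨hMG, fun e he v hv => ⟨e, he, hv⟩, ?_⟩
  rintro v ⟨e, he, hve⟩
  refine ⟨e, ⟨he, hve⟩, ?_⟩
  rintro f ⟨hf, hvf⟩
  by_contra hfe
  exact hM f hf e he hfe v hvf hve

lemma IsEvDomSet.isDomSet_edgeVerts {M : Set (Sym2 V)} (hM : IsEvDomSet G M) :
    IsDomSet G (edgeVerts M) := by
  intro v hv
  obtain ⟨e, he, hve | ⟨u, hue, huv⟩⟩ := hM.2 v
  · exact absurd ⟨e, he, hve⟩ hv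
  · exact ⟨u, ⟨e, he, hue⟩, huv⟩

lemma IsDomSet.isEvDomSet_of_isPMOn {D : Set V} {M : Set (Sym2 V)} (hD : IsDomSet G D)
    (hM : IsPMOn G D M) : IsEvDomSet G M := by
  refine ⟨hM.1, fun v => ?_⟩
  by_cases hv : v ∈ D
  · obtain ⟨e, ⟨he, hve⟩, -⟩ := hM.2.2 v hv
    exact ⟨e, he, Or.inl hve⟩
  · obtain ⟨u, hu, huv⟩ := hD v hv
    obtain ⟨e, ⟨he, hue⟩, -⟩ := hM.2.2 u hu
    exact ⟨e, he, Or.inr ⟨u, hue, huv⟩⟩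

lemma edgeVerts_eq_biUnion [DecidableEq V] (M : Set (Sym2 V)) :
    edgeVerts M = ⋃ e ∈ M, (e.toFinset : Set V) := by
  ext v
  simp [edgeVerts]

lemma ncard_edgeVerts {M : Set (Sym2 V)} (hfin : M.Finite) (hdiag : ∀ e ∈ M, ¬ e.IsDiag)
    (hM : NoSharedVertex M) : (edgeVerts M).ncard = 2 * M.ncard := by
  classical
  have hdisj : M.PairwiseDisjoint fun e => (e.toFinset : Set V) := fun e he f hf hef =>
    Set.disjoint_left.2 fun v hve hvf =>
      hM e he f hf hef v (Sym2.mem_toFinset.1 hve) (Sym2.mem_toFinset.1 hvf)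
  rw [edgeVerts_eq_biUnion, hfin.ncard_biUnion (fun _ _ => Set.toFinite _) hdisj,
    finsum_mem_congr rfl fun e he => by
      rw [Set.ncard_coe_finset, Sym2.card_toFinset_of_not_isDiag e (hdiag e he)],
    ← finsum_one, mul_finsum_mem, mul_one]

lemma evDom_mk_iff {a b x : V} : EvDom G s(a, b) x ↔ x = a ∨ x = b ∨ G.Adj a x ∨ G.Adj b x := by
  simp [EvDom, or_assoc]

lemma IsPairedDomSet.exists_isEvDomSet [Finite V] {D : Set V} (hD : IsPairedDomSet G D) :
    ∃ M, IsEvDomSet G M ∧ edgeVerts M = D ∧ D.ncard = 2 * M.ncard := by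
  obtain ⟨hdom, M, hM⟩ := hD
  refine ⟨M, hdom.isEvDomSet_of_isPMOn hM, hM.edgeVerts_eq, ?_⟩
  rw [← hM.edgeVerts_eq, ncard_edgeVerts (Set.toFinite M)
    (fun e he => G.not_isDiag_of_mem_edgeSet (hM.1 he)) hM.noSharedVertex]

lemma IsMinEvDomSet.of_ncard_le {M M' : Set (Sym2 V)} (hM : IsMinEvDomSet G M)
    (hM' : IsEvDomSet G M') (h : M'.ncard ≤ M.ncard) : IsMinEvDomSet G M' :=
  ⟨hM', fun M'' hM'' => h.trans (hM.2 M'' hM'')⟩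

lemma IsEvDomSet.insert_sdiff_singleton {M : Set (Sym2 V)} {e g : Sym2 V} (hM : IsEvDomSet G M)
    (hg : g ∈ G.edgeSet) (hcov : ∀ x, EvDom G e x → ∃ f ∈ insert g (M \ {e}), EvDom G f x) :
    IsEvDomSet G (insert g (M \ {e})) := by
  refine ⟨Set.insert_subset hg (Set.sdiff_subset.trans hM.1), fun x => ?_⟩
  obtain ⟨f, hf, hfx⟩ := hM.2 x
  by_cases hfe : f = e
  · exact hcov x (hfe ▸ hfx)
  · exact ⟨f, Set.mem_insert_of_mem _ ⟨hf, hfe⟩, hfx⟩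

lemma exists_edge_ne_evDom_of_mem {v u : V} {f : Sym2 V} (hvu : G.Adj v u) (hf : f ∈ G.edgeSet)
    (hvf : v ∈ f) (hfvu : f ≠ s(v, u)) :
    ∃ g ∈ G.edgeSet, g ≠ s(v, u) ∧ ∀ x, EvDom G s(v, u) x → EvDom G f x ∨ EvDom G g x := by
  by_cases hleaf : ∃ w, G.Adj u w ∧ w ≠ v
  · obtain ⟨w, huw, hwv⟩ := hleaf
    refine ⟨s(u, w), huw, ?_, fun x hx => ?_⟩
    · intro h
      rcases Sym2.mem_iff.1 (h ▸ Sym2.mem_mk_left v u : v ∈ s(u, w)) with rfl | rfl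
      exacts [hvu.ne rfl, hwv rfl]
    · rw [evDom_mk_iff] at hx ⊢
      rcases hx with rfl | rfl | hvx | hux
      · exact Or.inl (Or.inl hvf)
      · exact Or.inr (Or.inl rfl)
      · exact Or.inl (Or.inr ⟨v, hvf, hvx⟩)
      · exact Or.inr (Or.inr (Or.inr (Or.inl hux)))
  · push Not at hleaf
    refine ⟨f, hf, hfvu, fun x hx => Or.inl ?_⟩
    rw [evDom_mk_iff] at hx
    rcases hx with rfl | rfl | hvx | hux
    · exact Or.inl hvf
    · exact Or.inr ⟨v, hvf, hvu⟩
    · exact Or.inr ⟨v, hvf, hvx⟩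
    · exact hleaf x hux ▸ Or.inl hvf

lemma IsMinEvDomSet.noSharedVertex_of_unique [Finite V] {M : Set (Sym2 V)}
    (hM : IsMinEvDomSet G M) (huniq : ∀ M', IsMinEvDomSet G M' → M' = M) :
    NoSharedVertex M := by
  intro e he f hf hef v hve hvf
  obtain ⟨u, rfl⟩ := Sym2.mem_iff_exists.1 hve
  obtain ⟨g, hg, hgvu, hcov⟩ :=
    exists_edge_ne_evDom_of_mem (hM.1.1 he) (hM.1.1 hf) hvf hef.symm
  have hmin : IsMinEvDomSet G (insert g (M \ {s(v, u)})) := by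
    refine hM.of_ncard_le (hM.1.insert_sdiff_singleton hg fun x hx => ?_)
      (Set.ncard_insert_sdiff_singleton_le he (Set.toFinite M))
    rcases hcov x hx with hfx | hgx
    · exact ⟨f, Set.mem_insert_of_mem _ ⟨hf, hef.symm⟩, hfx⟩
    · exact ⟨g, Set.mem_insert _ _, hgx⟩
  rcases (huniq _ hmin).symm ▸ he with h | ⟨-, h⟩
  exacts [hgvu h.symm, h rfl]

end

theorem stmt10_general [Fintype V] (G : SimpleGraph V)
    (M : Set (Sym2 V)) (hM : IsMinEvDomSet G M)
    (huniq : ∀ M' : Set (Sym2 V), IsMinEvDomSet G M' → M' = M) :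
    IsMinPairedDomSet G (edgeVerts M) ∧
      ∀ D' : Set V, IsMinPairedDomSet G D' → D' = edgeVerts M := by
  have hns : NoSharedVertex M := hM.noSharedVertex_of_unique huniq
  have hpds : IsPairedDomSet G (edgeVerts M) :=
    ⟨hM.1.isDomSet_edgeVerts, M, isPMOn_edgeVerts hM.1.1 hns⟩
  have hcard : (edgeVerts M).ncard = 2 * M.ncard :=
    ncard_edgeVerts (Set.toFinite M) (fun e he => G.not_isDiag_of_mem_edgeSet (hM.1.1 he)) hns
  have hmin : IsMinPairedDomSet G (edgeVerts M) := by
    refine ⟨hpds, fun D hD => ?_⟩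
    obtain ⟨M', hM', -, hD⟩ := hD.exists_isEvDomSet
    have := hM.2 M' hM'
    omega
  refine ⟨hmin, fun D ⟨hD, hDmin⟩ => ?_⟩
  obtain ⟨M', hM', rfl, hcard'⟩ := hD.exists_isEvDomSet
  have := hDmin _ hpds
  rw [huniq M' (hM.of_ncard_le hM' (by omega))]

theorem stmt10 [Fintype V] (G : SimpleGraph V) (hT : G.IsTree) (h2 : 2 ≤ Fintype.card V)
    (M : Set (Sym2 V)) (hM : IsMinEvDomSet G M)
    (huniq : ∀ M' : Set (Sym2 V), IsMinEvDomSet G M' → M' = M) :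
    IsMinPairedDomSet G (edgeVerts M) ∧
      ∀ D' : Set V, IsMinPairedDomSet G D' → D' = edgeVerts M :=
  stmt10_general G M hM huniq
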